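/- arXiv:2511.02621 — 6 statements merged into one kernel-verified Lean document; each statement's English description precedes it below -/
import Mathlib

section
/- Let a ∈ ℝ and let v : ℝ → ℝ be four times differentiable. If v satisfies the static generalized mKdV equation v''' − 6 v² v' + a v' = 0 on ℝ, then the function u = v² + v' − a/6 satisfies the static KdV equation u''' − 6 u u' = 0 on ℝ. -/
/-!
With `u = v² + v' − a/6` one has the Miura factorization
`u''' − 6 u u' = (2 v + ∂ₓ) (v''' − 6 v² v' + a v')`,
so `u` solves static KdV whenever `v` solves static generalized mKdV.
-/

noncomputable section

namespace Miura

def kdv (u : ℝ → ℝ) (x : ℝ) : ℝ :=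
  deriv (deriv (deriv u)) x - 6 * u x * deriv u x

def mkdv (a : ℝ) (v : ℝ → ℝ) (x : ℝ) : ℝ :=
  deriv (deriv (deriv v)) x - 6 * v x ^ 2 * deriv v x + a * deriv v x

def transform (a : ℝ) (v : ℝ → ℝ) (x : ℝ) : ℝ :=
  v x ^ 2 + deriv v x - a / 6

variable {a : ℝ} {v : ℝ → ℝ}

theorem deriv_transform (h₁ : Differentiable ℝ v) (h₂ : Differentiable ℝ (deriv v)) :
    deriv (transform a v) = fun x => 2 * v x * deriv v x + deriv (deriv v) x := by
  funext x
  have := (((h₁ x).hasDerivAt.pow 2).add (h₂ x).hasDerivAt).sub_const (a / 6)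
  exact this.deriv.trans (by ring)

theorem deriv_deriv_transform (h₁ : Differentiable ℝ v) (h₂ : Differentiable ℝ (deriv v))
    (h₃ : Differentiable ℝ (deriv (deriv v))) :
    deriv (deriv (transform a v)) = fun x =>
      2 * deriv v x ^ 2 + 2 * v x * deriv (deriv v) x + deriv (deriv (deriv v)) x := by
  funext x
  have := (((h₁ x).hasDerivAt.const_mul 2).mul (h₂ x).hasDerivAt).add (h₃ x).hasDerivAt
  rw [deriv_transform h₁ h₂]
  exact this.deriv.trans (by ring)

theorem deriv_deriv_deriv_transform (h₁ : Differentiable ℝ v)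
    (h₂ : Differentiable ℝ (deriv v)) (h₃ : Differentiable ℝ (deriv (deriv v)))
    (h₄ : Differentiable ℝ (deriv (deriv (deriv v)))) :
    deriv (deriv (deriv (transform a v))) = fun x =>
      6 * deriv v x * deriv (deriv v) x + 2 * v x * deriv (deriv (deriv v)) x
        + deriv (deriv (deriv (deriv v))) x := by
  funext x
  have := ((((h₂ x).hasDerivAt.pow 2).const_mul 2).add
    (((h₁ x).hasDerivAt.const_mul 2).mul (h₃ x).hasDerivAt)).add (h₄ x).hasDerivAt
  rw [deriv_deriv_transform h₁ h₂ h₃]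
  exact this.deriv.trans (by ring)

theorem deriv_mkdv (h₁ : Differentiable ℝ v) (h₂ : Differentiable ℝ (deriv v))
    (h₄ : Differentiable ℝ (deriv (deriv (deriv v)))) :
    deriv (mkdv a v) = fun x =>
      deriv (deriv (deriv (deriv v))) x - 12 * v x * deriv v x ^ 2
        - 6 * v x ^ 2 * deriv (deriv v) x + a * deriv (deriv v) x := by
  funext x
  have := ((h₄ x).hasDerivAt.sub (((h₁ x).hasDerivAt.pow 2).const_mul 6 |>.mul
    (h₂ x).hasDerivAt)).add ((h₂ x).hasDerivAt.const_mul a)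
  exact this.deriv.trans (by simp only [Pi.pow_apply]; ring)

theorem kdv_transform (h₁ : Differentiable ℝ v) (h₂ : Differentiable ℝ (deriv v))
    (h₃ : Differentiable ℝ (deriv (deriv v))) (h₄ : Differentiable ℝ (deriv (deriv (deriv v))))
    (x : ℝ) :
    kdv (transform a v) x = 2 * v x * mkdv a v x + deriv (mkdv a v) x := by
  rw [kdv, deriv_deriv_deriv_transform h₁ h₂ h₃ h₄, deriv_transform h₁ h₂, deriv_mkdv h₁ h₂ h₄]
  simp only [transform, mkdv]
  ring

end Miura

end

theorem miura_maps_mkdv_to_kdv_general (a : ℝ) (v : ℝ → ℝ)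
    (hv1 : Differentiable ℝ v)
    (hv2 : Differentiable ℝ (deriv v))
    (hv3 : Differentiable ℝ (deriv (deriv v)))
    (hmkdv : ∀ x : ℝ,
      deriv (deriv (deriv v)) x - 6 * v x ^ 2 * deriv v x + a * deriv v x = 0)
    (u : ℝ → ℝ) (hu : u = fun x => v x ^ 2 + deriv v x - a / 6) :
    ∀ x : ℝ, deriv (deriv (deriv u)) x - 6 * u x * deriv u x = 0 := by
  have hv''' : deriv (deriv (deriv v)) = fun x => 6 * v x ^ 2 * deriv v x - a * deriv v x :=
    funext fun x => by linarith [hmkdv x]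
  have hv4 : Differentiable ℝ (deriv (deriv (deriv v))) := by
    rw [hv''']
    fun_prop
  have hsol : Miura.mkdv a v = 0 := funext hmkdv
  obtain rfl : u = Miura.transform a v := hu
  intro x
  change Miura.kdv (Miura.transform a v) x = 0
  rw [Miura.kdv_transform hv1 hv2 hv3 hv4 x, hsol]
  simp

/-- If `v` satisfies the static generalized mKdV equation `v''' − 6 v² v' + a v' = 0`,
then `u = v² + v' − a/6` satisfies the static KdV equation `u''' − 6 u u' = 0`. -/
theorem miura_maps_mkdv_to_kdv (a : ℝ) (v : ℝ → ℝ)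
    (hv1 : Differentiable ℝ v)
    (hv2 : Differentiable ℝ (deriv v))
    (hv3 : Differentiable ℝ (deriv (deriv v)))
    (hv4 : Differentiable ℝ (deriv (deriv (deriv v))))
    (hmkdv : ∀ x : ℝ,
      deriv (deriv (deriv v)) x - 6 * v x ^ 2 * deriv v x + a * deriv v x = 0)
    (u : ℝ → ℝ) (hu : u = fun x => v x ^ 2 + deriv v x - a / 6) :
    ∀ x : ℝ, deriv (deriv (deriv u)) x - 6 * u x * deriv u x = 0 :=
  miura_maps_mkdv_to_kdv_general a v hv1 hv2 hv3 hmkdv u hu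
end

section
/- Let a ∈ ℝ and let v : ℝ → ℝ be three times differentiable. Define u : ℝ → ℝ by the square transformation u = 2 v² − 2a/3. Then the identity u''' − 6 u u' = (4 v (d/dx) + 12 v')(v'' − 2 v³ + a v) holds on ℝ, i.e. for all x, u'''(x) − 6 u(x) u'(x) = 4 v(x)(v'''(x) − 6 v(x)² v'(x) + a v'(x)) + 12 v'(x)(v''(x) − 2 v(x)³ + a v(x)). -/
/-! Every derivative of `u` is twice the corresponding derivative of `v²`, and the first three
derivatives of `v²` are polynomials in `v, v', v'', v'''` (Leibniz rule). Substituting them turns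
the claim into a polynomial identity in these four quantities. -/

section SquareDerivatives

variable {𝕜 : Type*} [NontriviallyNormedField 𝕜] {f : 𝕜 → 𝕜}

theorem deriv_fun_sq_eq (hf : Differentiable 𝕜 f) :
    deriv (fun x => f x ^ 2) = fun x => 2 * f x * deriv f x := by
  funext x
  rw [deriv_fun_pow (hf x)]
  ring

theorem deriv_deriv_fun_sq_eq (hf : Differentiable 𝕜 f) (hf' : Differentiable 𝕜 (deriv f)) :
    deriv (deriv fun x => f x ^ 2) = fun x => 2 * (deriv f x ^ 2 + f x * deriv (deriv f) x) := by
  funext x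
  rw [deriv_fun_sq_eq hf, deriv_fun_mul ((hf x).const_mul 2) (hf' x), deriv_const_mul _ (hf x)]
  ring

theorem deriv_deriv_deriv_fun_sq_eq (hf : Differentiable 𝕜 f) (hf' : Differentiable 𝕜 (deriv f))
    (hf'' : Differentiable 𝕜 (deriv (deriv f))) :
    deriv (deriv (deriv fun x => f x ^ 2)) = fun x =>
      2 * (3 * deriv f x * deriv (deriv f) x + f x * deriv (deriv (deriv f)) x) := by
  funext x
  have hsq : DifferentiableAt 𝕜 (fun y => deriv f y ^ 2) x := (hf' x).pow 2
  have hmul : DifferentiableAt 𝕜 (fun y => f y * deriv (deriv f) y) x := (hf x).mul (hf'' x)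
  rw [deriv_deriv_fun_sq_eq hf hf', deriv_const_mul_field']
  beta_reduce
  rw [deriv_fun_add hsq hmul, deriv_fun_pow (hf' x), deriv_fun_mul (hf x) (hf'' x)]
  ring

end SquareDerivatives

/-- Square transformation identity: for `u = 2 v² − 2a/3`, one has
`u''' − 6 u u' = (4 v d/dx + 12 v')(v'' − 2 v³ + a v)`. -/
theorem square_transformation_identity (a : ℝ) (v : ℝ → ℝ)
    (hv1 : Differentiable ℝ v)
    (hv2 : Differentiable ℝ (deriv v))
    (hv3 : Differentiable ℝ (deriv (deriv v)))
    (u : ℝ → ℝ) (hu : u = fun x => 2 * v x ^ 2 - 2 * a / 3) :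
    ∀ x : ℝ,
      deriv (deriv (deriv u)) x - 6 * u x * deriv u x
        = 4 * v x *
            (deriv (deriv (deriv v)) x - 6 * v x ^ 2 * deriv v x + a * deriv v x)
          + 12 * deriv v x * (deriv (deriv v) x - 2 * v x ^ 3 + a * v x) := by
  have hu' : deriv u = fun x => 2 * deriv (fun y => v y ^ 2) x := by
    rw [hu, deriv_sub_const_fun, deriv_const_mul_field']
  intro x
  rw [hu', deriv_const_mul_field', deriv_const_mul_field', deriv_deriv_deriv_fun_sq_eq hv1 hv2 hv3,
    deriv_fun_sq_eq hv1, hu]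
  ring
end

section
/- Let a ∈ ℝ and let v : ℝ → ℝ be three times differentiable. If v satisfies v'' − 2 v³ + a v = 0 on ℝ, then the function u = 2 v² − 2a/3 satisfies the static KdV equation u''' − 6 u u' = 0 on ℝ. -/
/-!
Differentiate `u = 2 v² - 2a/3` three times, replacing `v''` by `2 v³ - a v` after each
differentiation, so that `v'''` never occurs: `u' = 4 v v'`, `u'' = 4 v'² + 8 v⁴ - 4 a v²` and
`u''' = 16 v v' (3 v² - a)`, which is also `6 u u'`.
-/

section StaticMKdV

variable {v : ℝ → ℝ} {a x : ℝ}

theorem hasDerivAt_two_mul_sq_sub_const (hv : DifferentiableAt ℝ v x) (c : ℝ) :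
    HasDerivAt (fun y => 2 * v y ^ 2 - c) (4 * v x * deriv v x) x := by
  refine (((hv.hasDerivAt.pow 2).const_mul 2).sub_const c).congr_deriv ?_
  ring

theorem hasDerivAt_four_mul_mul_deriv (hv'' : deriv (deriv v) = fun y => 2 * v y ^ 3 - a * v y)
    (hv : DifferentiableAt ℝ v x) (hv' : DifferentiableAt ℝ (deriv v) x) :
    HasDerivAt (fun y => 4 * v y * deriv v y)
      (4 * deriv v x ^ 2 + 8 * v x ^ 4 - 4 * a * v x ^ 2) x := by
  refine ((hv.hasDerivAt.const_mul 4).mul hv'.hasDerivAt).congr_deriv ?_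
  rw [hv'']
  ring

theorem hasDerivAt_four_mul_deriv_sq_add (hv'' : deriv (deriv v) = fun y => 2 * v y ^ 3 - a * v y)
    (hv : DifferentiableAt ℝ v x) (hv' : DifferentiableAt ℝ (deriv v) x) :
    HasDerivAt (fun y => 4 * deriv v y ^ 2 + 8 * v y ^ 4 - 4 * a * v y ^ 2)
      (48 * v x ^ 3 * deriv v x - 16 * a * v x * deriv v x) x := by
  refine ((((hv'.hasDerivAt.pow 2).const_mul 4).add ((hv.hasDerivAt.pow 4).const_mul 8)).sub
    ((hv.hasDerivAt.pow 2).const_mul (4 * a))).congr_deriv ?_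
  rw [hv'']
  ring

end StaticMKdV

theorem square_maps_to_kdv_general (a : ℝ) (v : ℝ → ℝ)
    (hv1 : Differentiable ℝ v)
    (hv2 : Differentiable ℝ (deriv v))
    (heq : ∀ x : ℝ, deriv (deriv v) x - 2 * v x ^ 3 + a * v x = 0)
    (u : ℝ → ℝ) (hu : u = fun x => 2 * v x ^ 2 - 2 * a / 3) :
    ∀ x : ℝ, deriv (deriv (deriv u)) x - 6 * u x * deriv u x = 0 := by
  have hv'' : deriv (deriv v) = fun x => 2 * v x ^ 3 - a * v x :=
    funext fun x => by linarith [heq x]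
  have du : deriv u = fun x => 4 * v x * deriv v x :=
    funext fun x => hu ▸ (hasDerivAt_two_mul_sq_sub_const (hv1 x) _).deriv
  have ddu : deriv (deriv u) = fun x => 4 * deriv v x ^ 2 + 8 * v x ^ 4 - 4 * a * v x ^ 2 :=
    du ▸ funext fun x => (hasDerivAt_four_mul_mul_deriv hv'' (hv1 x) (hv2 x)).deriv
  intro x
  rw [ddu, (hasDerivAt_four_mul_deriv_sq_add hv'' (hv1 x) (hv2 x)).deriv, du, hu]
  ring

/-- If `v` satisfies `v'' − 2 v³ + a v = 0`, then `u = 2 v² − 2a/3`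
satisfies the static KdV equation `u''' − 6 u u' = 0`. -/
theorem square_maps_to_kdv (a : ℝ) (v : ℝ → ℝ)
    (hv1 : Differentiable ℝ v)
    (hv2 : Differentiable ℝ (deriv v))
    (hv3 : Differentiable ℝ (deriv (deriv v)))
    (heq : ∀ x : ℝ, deriv (deriv v) x - 2 * v x ^ 3 + a * v x = 0)
    (u : ℝ → ℝ) (hu : u = fun x => 2 * v x ^ 2 - 2 * a / 3) :
    ∀ x : ℝ, deriv (deriv (deriv u)) x - 6 * u x * deriv u x = 0 :=
  square_maps_to_kdv_general a v hv1 hv2 heq u hu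
end

section
/- Let a ∈ ℝ and let v : ℝ → ℝ be three times differentiable and nowhere zero. If v satisfies the first-order equation (v')² − v⁴ + a v² − 1/2 = 0 on ℝ, then the function u = 1/v² − 2a/3 (the inverse square transformation) satisfies the static KdV equation u''' − 6 u u' = 0 on ℝ. -/
/-!
Writing `u = 1/v² − 2a/3`, the equation for `v` becomes the first integral
`(u')² = 2u³ + αu + β` of static KdV. Differentiating it gives `u' · (u'' − 3u² − α/2) = 0`.
Where `u'` takes nonzero values arbitrarily close to a point, the bracket vanishes frequently
there, so its derivative `u''' − 6uu'` is zero; near any other point `u'` vanishes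
identically, and so does `u'''`.
-/

open Filter Topology

section FirstIntegral

variable {u P P' P'' : ℝ → ℝ}

theorem deriv_mul_eq_zero_of_sq_deriv_eq (hP : ∀ y, HasDerivAt P (P' y) y)
    (hu : Differentiable ℝ u) (hu' : Differentiable ℝ (deriv u))
    (h : ∀ x, deriv u x ^ 2 = P (u x)) (x : ℝ) :
    deriv u x * (deriv (deriv u) x - P' (u x) / 2) = 0 := by
  have hsq : HasDerivAt (fun y => deriv u y ^ 2) (2 * deriv u x * deriv (deriv u) x) x := by
    simpa using (hu' x).hasDerivAt.fun_pow 2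
  have hcomp : HasDerivAt (fun y => deriv u y ^ 2) (P' (u x) * deriv u x) x := by
    rw [show (fun y => deriv u y ^ 2) = P ∘ u from funext h]
    exact (hP (u x)).comp x (hu x).hasDerivAt
  linear_combination hsq.unique hcomp / 2

theorem deriv_deriv_deriv_eq_of_sq_deriv_eq (hP : ∀ y, HasDerivAt P (P' y) y)
    (hP' : ∀ y, HasDerivAt P' (P'' y) y) (hu : Differentiable ℝ u)
    (hu' : Differentiable ℝ (deriv u)) (hu'' : Differentiable ℝ (deriv (deriv u)))
    (h : ∀ x, deriv u x ^ 2 = P (u x)) (x : ℝ) :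
    deriv (deriv (deriv u)) x = P'' (u x) / 2 * deriv u x := by
  by_cases hfreq : ∃ᶠ y in 𝓝[≠] x, deriv u y ≠ 0
  · set R := fun y => deriv (deriv u) y - P' (u y) / 2
    have hR : HasDerivAt R (deriv (deriv (deriv u)) x - P'' (u x) * deriv u x / 2) x :=
      (hu'' x).hasDerivAt.sub (((hP' (u x)).comp x (hu x).hasDerivAt).div_const 2)
    have hR0 : deriv R x = 0 := deriv_zero_of_frequently_const <| hfreq.mono fun y hy =>
      (mul_eq_zero.1 (deriv_mul_eq_zero_of_sq_deriv_eq hP hu hu' h y)).resolve_left hy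
    linear_combination hR.deriv.symm.trans hR0
  · have hloc : deriv u =ᶠ[𝓝 x] 0 :=
      ((hu' x).continuousAt.eventuallyEq_nhds_iff_eventuallyEq_nhdsNE continuousAt_const).1
        (not_frequently.1 hfreq |>.mono fun _ hy => not_not.1 hy)
    rw [hloc.deriv.deriv_eq, hloc.self_of_nhds]
    simp

end FirstIntegral

theorem static_kdv_of_sq_deriv_eq_cubic {u : ℝ → ℝ} {α β : ℝ} (hu : Differentiable ℝ u)
    (hu' : Differentiable ℝ (deriv u)) (hu'' : Differentiable ℝ (deriv (deriv u)))
    (h : ∀ x, deriv u x ^ 2 = 2 * u x ^ 3 + α * u x + β) (x : ℝ) :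
    deriv (deriv (deriv u)) x - 6 * u x * deriv u x = 0 := by
  have hP (y : ℝ) : HasDerivAt (fun y => 2 * y ^ 3 + α * y + β) (6 * y ^ 2 + α) y :=
    ((((hasDerivAt_pow 3 y).const_mul 2).fun_add ((hasDerivAt_id' y).const_mul α)).add_const
      β).congr_deriv (by ring)
  have hP' (y : ℝ) : HasDerivAt (fun y => 6 * y ^ 2 + α) (12 * y) y :=
    (((hasDerivAt_pow 2 y).const_mul 6).add_const α).congr_deriv (by ring)
  rw [deriv_deriv_deriv_eq_of_sq_deriv_eq hP hP' hu hu' hu'' h x]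
  ring

section InverseSquare

variable {v : ℝ → ℝ} {x : ℝ}

theorem hasDerivAt_one_div_sq_sub (hv : DifferentiableAt ℝ v x) (hvx : v x ≠ 0) (c : ℝ) :
    HasDerivAt (fun y => 1 / v y ^ 2 - c) (-2 * deriv v x / v x ^ 3) x := by
  simp only [one_div]
  refine (((hv.hasDerivAt.fun_pow 2).fun_inv (pow_ne_zero 2 hvx)).sub_const c).congr_deriv ?_
  field_simp
  ring

theorem hasDerivAt_deriv_div_cube (hv : DifferentiableAt ℝ v x)
    (hv' : DifferentiableAt ℝ (deriv v) x) (hvx : v x ≠ 0) :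
    HasDerivAt (fun y => -2 * deriv v y / v y ^ 3)
      ((-2 * deriv (deriv v) x * v x + 6 * deriv v x ^ 2) / v x ^ 4) x := by
  refine ((hv'.hasDerivAt.const_mul (-2)).fun_div (hv.hasDerivAt.fun_pow 3)
    (pow_ne_zero 3 hvx)).congr_deriv ?_
  field_simp
  ring

end InverseSquare

/-- Inverse square transformation: if `v` is nowhere zero and satisfies
`(v')² − v⁴ + a v² − 1/2 = 0`, then `u = 1/v² − 2a/3` satisfies the static
KdV equation `u''' − 6 u u' = 0`. -/
theorem inverse_square_maps_to_kdv (a : ℝ) (v : ℝ → ℝ)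
    (hv1 : Differentiable ℝ v)
    (hv2 : Differentiable ℝ (deriv v))
    (hv3 : Differentiable ℝ (deriv (deriv v)))
    (hvz : ∀ x : ℝ, v x ≠ 0)
    (heq : ∀ x : ℝ, (deriv v x) ^ 2 - v x ^ 4 + a * v x ^ 2 - 1 / 2 = 0)
    (u : ℝ → ℝ) (hu : u = fun x => 1 / v x ^ 2 - 2 * a / 3) :
    ∀ x : ℝ, deriv (deriv (deriv u)) x - 6 * u x * deriv u x = 0 := by
  subst hu
  have hu' : deriv (fun x => 1 / v x ^ 2 - 2 * a / 3) = fun x => -2 * deriv v x / v x ^ 3 :=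
    funext fun x => (hasDerivAt_one_div_sq_sub (hv1 x) (hvz x) _).deriv
  have hu'' : deriv (fun x => -2 * deriv v x / v x ^ 3) =
      fun x => (-2 * deriv (deriv v) x * v x + 6 * deriv v x ^ 2) / v x ^ 4 :=
    funext fun x => (hasDerivAt_deriv_div_cube (hv1 x) (hv2 x) (hvz x)).deriv
  -- By `heq`, `(u')² = 4(v')²/v⁶` is the cubic `2w³ − 4aw² + 4w` in `w = 1/v²`;
  -- the shift by `2a/3` removes its square term.
  refine static_kdv_of_sq_deriv_eq_cubic (α := 4 - 8 * a ^ 2 / 3)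
    (β := 8 * a / 3 - 32 * a ^ 3 / 27) ?_ ?_ ?_ fun x => ?_
  · exact fun x => (hasDerivAt_one_div_sq_sub (hv1 x) (hvz x) _).differentiableAt
  · rw [hu']
    exact fun x => (hasDerivAt_deriv_div_cube (hv1 x) (hv2 x) (hvz x)).differentiableAt
  · rw [hu', hu'']
    fun_prop (disch := exact fun x => pow_ne_zero 4 (hvz x))
  · have hvx := hvz x
    rw [hu', div_pow, mul_pow, show deriv v x ^ 2 = v x ^ 4 - a * v x ^ 2 + 1 / 2 by
      linear_combination heq x]
    field_simp
    ring
end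

section
/- Let a ∈ ℝ and let v : ℝ → ℝ be three times differentiable and nowhere zero. If v satisfies the first-order equation (v')² − v⁴ + a v² − 2 v = 0 on ℝ, then the function u = 1/v − a/6 (the inverse power transformation) satisfies the static KdV equation u''' − 6 u u' = 0 on ℝ. -/
/-!
Differentiating the first integral `(v')² = F(v)` gives `v' (2 v'' - F'(v)) = 0`. Near a point where
`2 v'' - F'(v) ≠ 0` the derivative `v'` vanishes, so `v` is locally constant there and so is
`2 v'' - F'(v)`; since `ℝ` is connected, either `v' ≡ 0` or `v'' = 2 v³ - a v + 1` everywhere. In the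
first case `u` is constant. In the second, `u = 1/v - a/6` satisfies `u'' = 3 u² - a²/12`, whose
derivative is the static KdV equation.
-/

open Filter Topology

theorem Continuous.apply_eq_of_locallyConstant_off {X Y : Type*} [TopologicalSpace X]
    [PreconnectedSpace X] [TopologicalSpace Y] [T1Space Y] {g : X → Y} (hg : Continuous g)
    {b : Y} (hloc : ∀ x, g x ≠ b → ∀ᶠ y in 𝓝 x, g y = g x) {x : X} (hx : g x ≠ b) (y : X) :
    g y = g x := by
  have hclopen : IsClopen {y | g y = g x} := by
    refine ⟨isClosed_singleton.preimage hg, isOpen_iff_mem_nhds.mpr fun z hz => ?_⟩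
    have hz : g z = g x := hz
    filter_upwards [hloc z (hz ▸ hx)] with w hw
    exact hw.trans hz
  exact Set.eq_univ_iff_forall.mp (hclopen.eq_univ ⟨x, rfl⟩) y

theorem eventuallyEq_const_of_deriv_eventuallyEq_zero {𝕜 G : Type*} [RCLike 𝕜]
    [NormedAddCommGroup G] [NormedSpace 𝕜 G] {f : 𝕜 → G} {x : 𝕜}
    (hf : Differentiable 𝕜 f) (hf' : deriv f =ᶠ[𝓝 x] 0) : f =ᶠ[𝓝 x] fun _ => f x := by
  obtain ⟨ε, hε, hball⟩ := Metric.eventually_nhds_iff_ball.mp hf'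
  filter_upwards [Metric.ball_mem_nhds x hε] with y hy
  exact Metric.isOpen_ball.is_const_of_deriv_eq_zero (convex_ball x ε).isPreconnected
    hf.differentiableOn (fun z hz => hball z hz) hy (Metric.mem_ball_self hε)

section FirstIntegral

variable {v F F' : ℝ → ℝ}

theorem deriv_mul_eq_zero_of_sq_deriv_eq_s5 (hv : Differentiable ℝ v)
    (hv' : Differentiable ℝ (deriv v)) (hF : ∀ y, HasDerivAt F (F' y) y)
    (henergy : ∀ x, deriv v x ^ 2 = F (v x)) (x : ℝ) :
    deriv v x * (2 * deriv (deriv v) x - F' (v x)) = 0 := by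
  have hconst : deriv v ^ 2 - F ∘ v = 0 :=
    funext fun x => sub_eq_zero.mpr (henergy x)
  have hD := ((hv' x).hasDerivAt.pow 2).sub ((hF (v x)).comp x (hv x).hasDerivAt)
  rw [hconst] at hD
  have h0 := (hasDerivAt_const x (0 : ℝ)).unique hD
  simp only [Nat.cast_ofNat, Nat.add_one_sub_one, pow_one] at h0
  linear_combination -h0

theorem deriv_eq_zero_or_two_mul_deriv_deriv_eq (hv : Differentiable ℝ v)
    (hv' : Differentiable ℝ (deriv v)) (hv'' : Continuous (deriv (deriv v)))
    (hF : ∀ y, HasDerivAt F (F' y) y) (hF' : Continuous F')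
    (henergy : ∀ x, deriv v x ^ 2 = F (v x)) :
    (∀ x, deriv v x = 0) ∨ ∀ x, 2 * deriv (deriv v) x = F' (v x) := by
  set w : ℝ → ℝ := fun x => 2 * deriv (deriv v) x - F' (v x)
  have hvw : ∀ x, deriv v x * w x = 0 := deriv_mul_eq_zero_of_sq_deriv_eq_s5 hv hv' hF henergy
  have hw : Continuous w := (continuous_const.mul hv'').sub (hF'.comp hv.continuous)
  have hloc : ∀ x, w x ≠ 0 → ∀ᶠ y in 𝓝 x, w y = w x := by
    intro x hx
    have hv'_zero : deriv v =ᶠ[𝓝 x] 0 := by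
      filter_upwards [hw.continuousAt.eventually_ne hx] with y hy
      exact (mul_eq_zero.mp (hvw y)).resolve_right hy
    have hv''_zero : deriv (deriv v) =ᶠ[𝓝 x] 0 := by
      simpa using hv'_zero.deriv
    filter_upwards [hv''_zero, eventuallyEq_const_of_deriv_eventuallyEq_zero hv hv'_zero]
      with y hy hvy
    simp only [w, hy, hvy, hv''_zero.self_of_nhds, Pi.zero_apply]
  by_cases hw0 : ∃ x₀, w x₀ ≠ 0
  · obtain ⟨x₀, hx₀⟩ := hw0
    left
    intro x
    refine (mul_eq_zero.mp (hvw x)).resolve_right ?_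
    rw [hw.apply_eq_of_locallyConstant_off hloc hx₀ x]
    exact hx₀
  · push Not at hw0
    exact Or.inr fun x => sub_eq_zero.mp (hw0 x)

end FirstIntegral

theorem hasDerivAt_one_div_sub_const {v : ℝ → ℝ} {x : ℝ} (hv : DifferentiableAt ℝ v x)
    (hx : v x ≠ 0) (c : ℝ) : HasDerivAt (fun x => 1 / v x - c) (-deriv v x / v x ^ 2) x := by
  simpa [one_div] using (hv.hasDerivAt.inv hx).sub_const c

theorem deriv_deriv_one_div_sub_const {a : ℝ} {v : ℝ → ℝ} (hv : Differentiable ℝ v)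
    (hv' : Differentiable ℝ (deriv v)) (hvz : ∀ x, v x ≠ 0)
    (henergy : ∀ x, deriv v x ^ 2 = v x ^ 4 - a * v x ^ 2 + 2 * v x)
    (hnewton : ∀ x, deriv (deriv v) x = 2 * v x ^ 3 - a * v x + 1) (x : ℝ) :
    deriv (deriv fun x => 1 / v x - a / 6) x = 3 * (1 / v x - a / 6) ^ 2 - a ^ 2 / 12 := by
  have hx := hvz x
  have hderiv : deriv (fun x => 1 / v x - a / 6) = fun x => -deriv v x / v x ^ 2 :=
    funext fun x => (hasDerivAt_one_div_sub_const (hv x) (hvz x) _).deriv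
  have hderiv2 : HasDerivAt (fun x => -deriv v x / v x ^ 2)
      ((-deriv (deriv v) x * v x ^ 2 + deriv v x * (2 * v x * deriv v x)) / (v x ^ 2) ^ 2) x := by
    simpa using (hv' x).hasDerivAt.fun_neg.fun_div ((hv x).hasDerivAt.fun_pow 2) (pow_ne_zero 2 hx)
  calc deriv (deriv fun x => 1 / v x - a / 6) x
      = (-deriv (deriv v) x * v x ^ 2 + deriv v x * (2 * v x * deriv v x)) / (v x ^ 2) ^ 2 := by
        rw [hderiv, hderiv2.deriv]
    _ = 3 / v x ^ 2 - a / v x := by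
        field_simp
        linear_combination 2 * henergy x - v x * hnewton x
    _ = 3 * (1 / v x - a / 6) ^ 2 - a ^ 2 / 12 := by ring

theorem deriv_deriv_deriv_of_deriv_deriv_eq {u : ℝ → ℝ} {c : ℝ} (hu : Differentiable ℝ u)
    (h : ∀ x, deriv (deriv u) x = 3 * u x ^ 2 - c) (x : ℝ) :
    deriv (deriv (deriv u)) x = 6 * u x * deriv u x := by
  have hd : HasDerivAt (fun x => 3 * u x ^ 2 - c) (3 * (2 * u x * deriv u x)) x := by
    simpa using ((hu x).hasDerivAt.fun_pow 2).const_mul 3 |>.sub_const c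
  rw [funext h, hd.deriv]
  ring

/-- Inverse power transformation: if `v` is nowhere zero and satisfies
`(v')² − v⁴ + a v² − 2 v = 0`, then `u = 1/v − a/6` satisfies the static
KdV equation `u''' − 6 u u' = 0`. -/
theorem inverse_power_maps_to_kdv (a : ℝ) (v : ℝ → ℝ)
    (hv1 : Differentiable ℝ v)
    (hv2 : Differentiable ℝ (deriv v))
    (hv3 : Differentiable ℝ (deriv (deriv v)))
    (hvz : ∀ x : ℝ, v x ≠ 0)
    (heq : ∀ x : ℝ, (deriv v x) ^ 2 - v x ^ 4 + a * v x ^ 2 - 2 * v x = 0)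
    (u : ℝ → ℝ) (hu : u = fun x => 1 / v x - a / 6) :
    ∀ x : ℝ, deriv (deriv (deriv u)) x - 6 * u x * deriv u x = 0 := by
  subst hu
  have henergy : ∀ x, deriv v x ^ 2 = v x ^ 4 - a * v x ^ 2 + 2 * v x :=
    fun x => by linear_combination heq x
  have hF : ∀ y : ℝ, HasDerivAt (fun y => y ^ 4 - a * y ^ 2 + 2 * y)
      (2 * (2 * y ^ 3 - a * y + 1)) y := fun y =>
    (((hasDerivAt_pow 4 y).sub ((hasDerivAt_pow 2 y).const_mul a)).add
      ((hasDerivAt_id y).const_mul 2)).congr_deriv (by ring)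
  have hdiff : Differentiable ℝ fun x => 1 / v x - a / 6 :=
    fun x => (hasDerivAt_one_div_sub_const (hv1 x) (hvz x) _).differentiableAt
  rcases deriv_eq_zero_or_two_mul_deriv_deriv_eq hv1 hv2 hv3.continuous hF (by fun_prop)
    henergy with hv'_zero | hnewton
  · have hu' : deriv (fun x => 1 / v x - a / 6) = 0 := funext fun x => by
      rw [(hasDerivAt_one_div_sub_const (hv1 x) (hvz x) _).deriv, hv'_zero x, neg_zero, zero_div,
        Pi.zero_apply]
    intro x
    rw [hu']
    simp
  · intro x
    rw [deriv_deriv_deriv_of_deriv_deriv_eq hdiff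
      (deriv_deriv_one_div_sub_const hv1 hv2 hvz henergy fun x => by linarith [hnewton x]) x]
    ring
end

section
/- Let v : ℝ × ℝ → ℝ be smooth (arguments (x,t)) and let η, b ∈ ℝ. Define the 2×2 real matrix-valued functions L = [[η, v], [−v, −η]] and M = [[A, B], [C, −A]] with A = −2η v² − 4η³ b, B = −v_xx − 2η v_x − 2 v³ − 4η² b v, C = v_xx − 2η v_x + 2 v³ + 4η² b v (subscripts denoting partial x-derivatives). Then the zero-curvature expression satisfies ∂L/∂t − ∂M/∂x + LM − ML = [[0, D], [−D, 0]], where D = v_t + v_xxx + 6 v² v_x + 4η²(b − 1) v_x. -/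
/-- Partial derivative in the first (space) variable. -/
noncomputable def px (f : ℝ × ℝ → ℝ) (p : ℝ × ℝ) : ℝ :=
  deriv (fun x => f (x, p.2)) p.1

/-- Partial derivative in the second (time) variable. -/
noncomputable def pt (f : ℝ × ℝ → ℝ) (p : ℝ × ℝ) : ℝ :=
  deriv (fun t => f (p.1, t)) p.2

/-!
The commutator of `L = [[η, v], [−v, −η]]` with a traceless `M = [[A, B], [C, −A]]` is
`[[v (B + C), 2 (η B − v A)], [−2 (v A + η C), −v (B + C)]]`. Here `B + C = −4η v_x`, so on the
diagonal `v (B + C)` cancels `A_x = −4η v v_x`; off the diagonal the terms `v³` and `η³ b v` of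
`η B` and `v A` cancel, and differentiating `B` and `C` in `x` leaves `±D`.
-/

open scoped ContDiff

section PartialDerivatives

variable {f : ℝ × ℝ → ℝ}

theorem hasDerivAt_px (hf : Differentiable ℝ f) (p : ℝ × ℝ) :
    HasDerivAt (fun y => f (y, p.2)) (px f p) p.1 :=
  ((hf.comp (differentiable_id.prodMk (differentiable_const p.2))) p.1).hasDerivAt

theorem px_eq_fderiv (hf : Differentiable ℝ f) : px f = fun p => fderiv ℝ f p (1, 0) :=
  funext fun p => ((hf p).hasFDerivAt.comp_hasDerivAt p.1
    ((hasDerivAt_id p.1).prodMk (hasDerivAt_const p.1 p.2))).deriv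

theorem ContDiff.px {n : WithTop ℕ∞} (hf : ContDiff ℝ (n + 1) f) : ContDiff ℝ n (px f) := by
  rw [px_eq_fderiv (hf.differentiable (by simp))]
  exact (hf.fderiv_right le_rfl).clm_apply contDiff_const

theorem px_neg (p : ℝ × ℝ) : px (fun q => -f q) p = -px f p :=
  deriv.neg

theorem pt_neg (p : ℝ × ℝ) : pt (fun q => -f q) p = -pt f p :=
  deriv.neg

theorem pt_const (c : ℝ) (p : ℝ × ℝ) : pt (fun _ => c) p = 0 :=
  deriv_const _ c

end PartialDerivatives

section Jets

variable {v : ℝ × ℝ → ℝ}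

theorem px_quadratic (hv : Differentiable ℝ v) (α β : ℝ) (p : ℝ × ℝ) :
    px (fun q => α * v q ^ 2 + β) p = 2 * α * v p * px v p :=
  ((((hasDerivAt_px hv p).pow 2).const_mul α).add_const β).deriv.trans (by ring)

theorem px_cubic_jet (hv : ContDiff ℝ 3 v) (α β γ δ : ℝ) (p : ℝ × ℝ) :
    px (fun q => α * px (px v) q + β * px v q + γ * v q ^ 3 + δ * v q) p
      = α * px (px (px v)) p + β * px (px v) p + 3 * γ * v p ^ 2 * px v p + δ * px v p := by
  have hvx : ContDiff ℝ 2 (px v) := ContDiff.px (n := 2) hv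
  have hvxx : ContDiff ℝ 1 (px (px v)) := ContDiff.px (n := 1) hvx
  have h₀ := hasDerivAt_px (hv.differentiable (by simp)) p
  have h₁ := hasDerivAt_px (hvx.differentiable (by simp)) p
  have h₂ := hasDerivAt_px (hvxx.differentiable (by simp)) p
  exact ((((h₂.const_mul α).add (h₁.const_mul β)).add ((h₀.pow 3).const_mul γ)).add
    (h₀.const_mul δ)).deriv.trans (by ring)

end Jets

theorem akns_commutator (η a β γ w : ℝ) :
    !![η, w; -w, -η] * !![a, β; γ, -a] - !![a, β; γ, -a] * !![η, w; -w, -η]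
      = !![w * (β + γ), 2 * (η * β - w * a); -2 * (w * a + η * γ), -(w * (β + γ))] := by
  ext i j
  fin_cases i <;> fin_cases j <;> simp <;> ring

theorem pt_entries_akns_L (η : ℝ) (w : ℝ × ℝ → ℝ) (p : ℝ × ℝ) :
    (Matrix.of fun i j => pt (fun q => !![η, w q; -w q, -η] i j) p)
      = !![0, pt w p; -pt w p, 0] := by
  ext i j
  fin_cases i <;> fin_cases j <;> simp [pt_neg, pt_const]

theorem px_entries_traceless (a β γ : ℝ × ℝ → ℝ) (p : ℝ × ℝ) :
    (Matrix.of fun i j => px (fun q => !![a q, β q; γ q, -a q] i j) p)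
      = !![px a p, px β p; px γ p, -px a p] := by
  ext i j
  fin_cases i <;> fin_cases j <;> simp [px_neg]

/-- AKNS zero-curvature identity for the generalized mKdV equation:
with `L = [[η, v], [−v, −η]]`, `M = [[A, B], [C, −A]]`,
`A = −2η v² − 4η³ b`, `B = −v_xx − 2η v_x − 2v³ − 4η² b v`,
`C = v_xx − 2η v_x + 2v³ + 4η² b v`, one has
`∂L/∂t − ∂M/∂x + L M − M L = [[0, D], [−D, 0]]` where
`D = v_t + v_xxx + 6 v² v_x + 4η²(b−1) v_x`. -/
theorem akns_zero_curvature (v : ℝ × ℝ → ℝ) (hv : ContDiff ℝ (⊤ : ℕ∞) v)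
    (η b : ℝ)
    (L M : ℝ × ℝ → Matrix (Fin 2) (Fin 2) ℝ)
    (hL : L = fun p => !![η, v p; -v p, -η])
    (A B C : ℝ × ℝ → ℝ)
    (hA : A = fun p => -2 * η * v p ^ 2 - 4 * η ^ 3 * b)
    (hB : B = fun p => -px (px v) p - 2 * η * px v p - 2 * v p ^ 3
        - 4 * η ^ 2 * b * v p)
    (hC : C = fun p => px (px v) p - 2 * η * px v p + 2 * v p ^ 3
        + 4 * η ^ 2 * b * v p)
    (hM : M = fun p => !![A p, B p; C p, -A p])
    (D : ℝ × ℝ → ℝ)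
    (hD : D = fun p => pt v p + px (px (px v)) p + 6 * v p ^ 2 * px v p
        + 4 * η ^ 2 * (b - 1) * px v p) :
    ∀ p : ℝ × ℝ,
      (Matrix.of fun i j => pt (fun q => L q i j) p)
        - (Matrix.of fun i j => px (fun q => M q i j) p)
        + L p * M p - M p * L p
      = !![0, D p; -D p, 0] := by
  intro p
  subst hL hM hD
  have hv₃ : ContDiff ℝ 3 v := hv.of_le (WithTop.coe_le_coe.mpr le_top)
  have hA' : A = fun q => -2 * η * v q ^ 2 + -4 * η ^ 3 * b := by
    rw [hA]; funext q; ring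
  have hB' : B = fun q => -1 * px (px v) q + -2 * η * px v q + -2 * v q ^ 3
      + -4 * η ^ 2 * b * v q := by
    rw [hB]; funext q; ring
  have hC' : C = fun q => 1 * px (px v) q + -2 * η * px v q + 2 * v q ^ 3
      + 4 * η ^ 2 * b * v q := by
    rw [hC]; funext q; ring
  rw [pt_entries_akns_L, px_entries_traceless, add_sub_assoc, akns_commutator, hA', hB', hC',
    px_quadratic (hv.differentiable (by simp)), px_cubic_jet hv₃, px_cubic_jet hv₃]
  ext i j
  fin_cases i <;> fin_cases j <;> simp <;> ring
end
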